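/- Define 𝒫^D₂(λ) = ⌊G_λ(0)+1/4⌋ + 2·Σ_{m=1}^{⌊λ⌋} ⌊G_λ(m)+1/4⌋. Then 𝒫^D₂(λ) < λ²/4 for all λ > 0. -/

import Mathlib

/-!
Count the lattice points under the graph of `G l` by rows instead of columns. On `[-l, l]`,
`G l` decreases from `l` to `0`, so it has an inverse `invG l` on `[0, l]`, and row `j` contains
`⌊invG l (j + 3/4)⌋₊` points `(m, j)` with `m ≥ 1`. As `G l` is convex with slope
`-arccos (z / l) / π ∈ [-1/2, 0]`, `invG l` is convex with slope at most `-2`, and its tangent at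
`j + 3/4` gives `∫_j^{j+1} invG l ≥ invG l (j + 3/4) + 1/2`, with an extra
`invG l (j + 3/4) / (π l)` because `arccos y ≤ π/2 - y`. Summing over the rows and comparing
areas with `∫₀^l G l = l²/8` bounds the count by `l²/4`; the extra term, or directly
`⌊l / π + 1/4⌋₊ < l²/4` when every `invG l (j + 3/4)` vanishes, makes the bound strict.
-/

noncomputable def G (l z : ℝ) : ℝ :=
  (1 / Real.pi) * (Real.sqrt (l ^ 2 - z ^ 2) - z * Real.arccos (z / l))

/-- the planar Dirichlet lattice count `𝒫^D₂(λ)` -/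
noncomputable def PD2 (l : ℝ) : ℤ :=
  ⌊G l 0 + 1 / 4⌋ + 2 * ∑ m ∈ Finset.Icc 1 ⌊l⌋₊, ⌊G l (m : ℝ) + 1 / 4⌋

open Real Set MeasureTheory
open scoped Finset

theorem ConvexOn.add_mul_sub_le_of_hasDerivAt {S : Set ℝ} {f : ℝ → ℝ} {f' x y : ℝ}
    (hf : ConvexOn ℝ S f) (hx : x ∈ S) (hy : y ∈ S) (hd : HasDerivAt f f' x) :
    f x + f' * (y - x) ≤ f y := by
  rcases lt_trichotomy x y with hxy | rfl | hxy
  · have := hf.le_slope_of_hasDerivAt hx hy hxy hd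
    rw [slope_def_field, le_div_iff₀ (sub_pos.2 hxy)] at this
    linarith
  · simp
  · have := hf.slope_le_of_hasDerivAt hy hx hxy hd
    rw [slope_def_field, div_le_iff₀ (sub_pos.2 hxy)] at this
    linarith

theorem Real.arccos_le_pi_div_two_sub {x : ℝ} (h₀ : 0 ≤ x) (h₁ : x ≤ 1) :
    arccos x ≤ π / 2 - x := by
  have : x ≤ arcsin x := by
    simpa [sin_arcsin (by linarith) h₁] using sin_le (arcsin_nonneg.2 h₀)
  rw [arccos_eq_pi_div_two_sub_arcsin]
  linarith

theorem Finset.sum_eq_sum_range_card_lt {ι : Type*} (s : Finset ι) (a : ι → ℕ) {K : ℕ}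
    (h : ∀ i ∈ s, a i ≤ K) : ∑ i ∈ s, a i = ∑ j ∈ Finset.range K, #{i ∈ s | j < a i} := by
  simp_rw [Finset.card_filter]
  rw [Finset.sum_comm]
  refine Finset.sum_congr rfl fun i hi => ?_
  rw [← Finset.card_filter, show {j ∈ Finset.range K | j < a i} = Finset.range (a i) by
    ext j; simp only [Finset.mem_filter, Finset.mem_range]; have := h i hi; omega]
  exact (Finset.card_range _).symm

theorem lt_floor_add_one_quarter_iff {a : ℝ} {j : ℕ} :
    j < ⌊a + 1 / 4⌋₊ ↔ (j : ℝ) + 3 / 4 ≤ a := by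
  rw [Nat.lt_iff_add_one_le, Nat.le_floor_iff' j.succ_ne_zero]
  push_cast
  constructor <;> intro <;> linarith

variable {l z s u : ℝ}

theorem continuous_G (l : ℝ) : Continuous (G l) := by
  unfold G
  fun_prop

theorem G_self (hl : 0 < l) : G l l = 0 := by
  simp [G, hl.ne']

theorem G_neg_self (hl : 0 < l) : G l (-l) = l := by
  rw [G, neg_sq, sub_self, sqrt_zero, neg_div, div_self hl.ne', arccos_neg_one]
  field_simp
  ring

theorem G_zero (hl : 0 < l) : G l 0 = l / π := by
  simp [G, sqrt_sq hl.le, div_eq_inv_mul]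

theorem G_zero_le_self (hl : 0 < l) : G l 0 ≤ l := by
  rw [G_zero hl]
  exact div_le_self hl.le (by linarith [pi_gt_three])

theorem sq_sub_sq_pos (hz : z ∈ Ioo (-l) l) : 0 < l ^ 2 - z ^ 2 := by
  obtain ⟨h₁, h₂⟩ := hz
  nlinarith

theorem sqrt_sq_sub_sq_pos (hz : z ∈ Ioo (-l) l) : 0 < √(l ^ 2 - z ^ 2) :=
  sqrt_pos.2 (sq_sub_sq_pos hz)

theorem hasDerivAt_arccos_div (hl : 0 < l) (hz : z ∈ Ioo (-l) l) :
    HasDerivAt (fun u => arccos (u / l)) (-1 / √(l ^ 2 - z ^ 2)) z := by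
  have h := (hasDerivAt_arccos (x := z / l) ?_ ?_).comp z ((hasDerivAt_id z).div_const l)
  · refine h.congr_deriv ?_
    rw [show (1 : ℝ) - (z / l) ^ 2 = (l ^ 2 - z ^ 2) / l ^ 2 by field_simp,
      sqrt_div' _ (sq_nonneg l), sqrt_sq hl.le]
    have := (sqrt_sq_sub_sq_pos hz).ne'
    field_simp
  · rw [ne_eq, div_eq_iff hl.ne']; linarith [hz.1]
  · rw [ne_eq, div_eq_iff hl.ne']; linarith [hz.2]

theorem hasDerivAt_arcsin_div (hl : 0 < l) (hz : z ∈ Ioo (-l) l) :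
    HasDerivAt (fun u => arcsin (u / l)) (1 / √(l ^ 2 - z ^ 2)) z := by
  have h := (hasDerivAt_arccos_div hl hz).const_sub (π / 2)
  simp only [← arcsin_eq_pi_div_two_sub_arccos] at h
  simpa [neg_div] using h

theorem hasDerivAt_sqrt_sq_sub_sq (hz : z ∈ Ioo (-l) l) :
    HasDerivAt (fun u => √(l ^ 2 - u ^ 2)) (-z / √(l ^ 2 - z ^ 2)) z := by
  have h := (((hasDerivAt_id z).pow 2).const_sub (l ^ 2)).sqrt (sq_sub_sq_pos hz).ne'
  refine h.congr_deriv ?_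
  simp only [id, Pi.pow_apply]
  ring

theorem hasDerivAt_G (hl : 0 < l) (hz : z ∈ Ioo (-l) l) :
    HasDerivAt (G l) (-arccos (z / l) / π) z := by
  have h := ((hasDerivAt_sqrt_sq_sub_sq hz).sub
    ((hasDerivAt_id z).mul (hasDerivAt_arccos_div hl hz))).const_mul (1 / π)
  refine h.congr_deriv ?_
  have := (sqrt_sq_sub_sq_pos hz).ne'
  simp only [id]
  field_simp
  ring

theorem strictAntiOn_G (hl : 0 < l) : StrictAntiOn (G l) (Icc (-l) l) := by
  refine strictAntiOn_of_deriv_neg (convex_Icc _ _) (continuous_G l).continuousOn fun z hz => ?_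
  rw [interior_Icc] at hz
  rw [(hasDerivAt_G hl hz).deriv, neg_div, neg_lt_zero]
  exact div_pos (arccos_pos.2 ((div_lt_one hl).2 hz.2)) pi_pos

theorem convexOn_G (hl : 0 < l) : ConvexOn ℝ (Icc (-l) l) (G l) := by
  refine MonotoneOn.convexOn_of_deriv (convex_Icc _ _) (continuous_G l).continuousOn ?_ ?_ <;>
    rw [interior_Icc]
  · exact fun z hz => (hasDerivAt_G hl hz).differentiableAt.differentiableWithinAt
  · intro y hy z hz hyz
    rw [(hasDerivAt_G hl hy).deriv, (hasDerivAt_G hl hz).deriv]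
    gcongr

theorem G_nonneg (hl : 0 < l) (hz : z ∈ Icc (-l) l) : 0 ≤ G l z := by
  rw [← G_self hl]
  exact (strictAntiOn_G hl).antitoneOn hz (right_mem_Icc.2 (by linarith [hz.1])) hz.2

noncomputable def primitiveG (l u : ℝ) : ℝ :=
  (3 / 4 * (u * √(l ^ 2 - u ^ 2)) + l ^ 2 / 4 * arcsin (u / l) - u ^ 2 / 2 * arccos (u / l)) / π

theorem hasDerivAt_primitiveG (hl : 0 < l) (hz : z ∈ Ioo (-l) l) :
    HasDerivAt (primitiveG l) (G l z) z := by
  have h := ((((hasDerivAt_id z).mul (hasDerivAt_sqrt_sq_sub_sq hz)).const_mul (3 / 4)).add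
    ((hasDerivAt_arcsin_div hl hz).const_mul (l ^ 2 / 4))).sub
    ((((hasDerivAt_id z).pow 2).div_const 2).mul (hasDerivAt_arccos_div hl hz)) |>.div_const π
  refine h.congr_deriv ?_
  have hw := sq_sqrt (sq_sub_sq_pos hz).le
  have := (sqrt_sq_sub_sq_pos hz).ne'
  simp only [G, id, Pi.pow_apply]
  field_simp
  linear_combination -2 * hw

theorem integral_G (hl : 0 < l) : ∫ u in (0 : ℝ)..l, G l u = l ^ 2 / 8 := by
  have hcont : Continuous (primitiveG l) := by unfold primitiveG; fun_prop
  rw [intervalIntegral.integral_eq_sub_of_hasDeriv_right_of_le hl.le hcont.continuousOn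
    (fun z hz => (hasDerivAt_primitiveG hl ⟨by linarith [hz.1], hz.2⟩).hasDerivWithinAt)
    ((continuous_G l).intervalIntegrable 0 l)]
  rw [primitiveG, primitiveG, div_self hl.ne', sub_self, sqrt_zero, arcsin_one, arccos_one,
    zero_div, arcsin_zero, arccos_zero]
  field_simp
  ring

theorem surjOn_G (hl : 0 < l) : SurjOn (G l) (Icc (-l) l) (Icc 0 l) := by
  have := intermediate_value_Icc' (by linarith : -l ≤ l) (continuous_G l).continuousOn
  rwa [G_self hl, G_neg_self hl] at this

-- Inverting on `[-l, l]` rather than `[0, l]` defines `invG l` on all of `[0, l]`, also beyond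
-- `G l 0 = l / π`, where the top row `[j, j + 1]` may reach.
noncomputable def invG (l s : ℝ) : ℝ := Function.invFunOn (G l) (Icc (-l) l) s

theorem invG_mem (hl : 0 < l) (hs : s ∈ Icc 0 l) : invG l s ∈ Icc (-l) l :=
  Function.invFunOn_mem (surjOn_G hl hs)

theorem G_invG (hl : 0 < l) (hs : s ∈ Icc 0 l) : G l (invG l s) = s :=
  Function.invFunOn_eq (surjOn_G hl hs)

theorem le_invG_iff (hl : 0 < l) (hu : u ∈ Icc (-l) l) (hs : s ∈ Icc 0 l) :
    u ≤ invG l s ↔ s ≤ G l u := by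
  rw [← (strictAntiOn_G hl).le_iff_ge (invG_mem hl hs) hu, G_invG hl hs]

theorem antitoneOn_invG (hl : 0 < l) : AntitoneOn (invG l) (Icc 0 l) := fun s hs t ht hst =>
  (le_invG_iff hl (invG_mem hl ht) hs).2 (by rwa [G_invG hl ht])

theorem invG_nonneg (hl : 0 < l) (hs : s ∈ Icc 0 l) (hs₀ : s ≤ G l 0) : 0 ≤ invG l s :=
  (le_invG_iff hl ⟨by linarith, hl.le⟩ hs).2 hs₀

theorem invG_lt_self (hl : 0 < l) (hs : s ∈ Icc 0 l) (hs₀ : 0 < s) : invG l s < l := by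
  rw [← not_le, le_invG_iff hl (right_mem_Icc.2 (by linarith)) hs, G_self hl]
  exact hs₀.not_ge

theorem intervalIntegrable_invG (hl : 0 < l) {a b : ℝ} (ha : 0 ≤ a) (hab : a ≤ b) (hb : b ≤ l) :
    IntervalIntegrable (invG l) volume a b := by
  refine AntitoneOn.intervalIntegrable ((antitoneOn_invG hl).mono ?_)
  rw [uIcc_of_le hab]
  exact Icc_subset_Icc ha hb

theorem tangent_le_invG (hl : 0 < l) {t : ℝ} (ht : t ∈ Icc 0 l) (htl : invG l t ∈ Ioo (-l) l)
    (hs : s ∈ Icc 0 l) :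
    invG l t - (s - t) / (arccos (invG l t / l) / π) ≤ invG l s := by
  have hc : 0 < arccos (invG l t / l) / π :=
    div_pos (arccos_pos.2 ((div_lt_one hl).2 htl.2)) pi_pos
  have := (convexOn_G hl).add_mul_sub_le_of_hasDerivAt (Ioo_subset_Icc_self htl)
    (invG_mem hl hs) (hasDerivAt_G hl htl)
  rw [G_invG hl ht, G_invG hl hs] at this
  rw [sub_le_comm, le_div_iff₀ hc]
  linear_combination this

theorem integral_tangent_line (j x c : ℝ) :
    ∫ s in j..j + 1, (x - (s - (j + 3 / 4)) / c) = x + 1 / (4 * c) := by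
  rw [intervalIntegral.integral_comp_sub_right (fun v => x - v / c),
    intervalIntegral.integral_sub intervalIntegrable_const
      (Continuous.intervalIntegrable (by fun_prop) _ _),
    intervalIntegral.integral_div, integral_id, intervalIntegral.integral_const, smul_eq_mul]
  ring

theorem le_integral_invG (hl : 0 < l) {j : ℝ} (hj : 0 ≤ j) (hjl : j + 1 ≤ l)
    (hjG : j + 3 / 4 ≤ G l 0) :
    invG l (j + 3 / 4) * (1 + 1 / (π * l)) + 1 / 2 ≤ ∫ s in j..j + 1, invG l s := by
  have ht : j + 3 / 4 ∈ Icc 0 l := ⟨by positivity, by linarith⟩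
  set x := invG l (j + 3 / 4)
  have hx₀ : 0 ≤ x := invG_nonneg hl ht hjG
  have hxl : x < l := invG_lt_self hl ht (by positivity)
  set c := arccos (x / l) / π
  have hc₀ : 0 < c := div_pos (arccos_pos.2 ((div_lt_one hl).2 hxl)) pi_pos
  have hc : c ≤ 1 / 2 - x / (π * l) := by
    have := arccos_le_pi_div_two_sub (div_nonneg hx₀ hl.le) ((div_le_one hl).2 hxl.le)
    rw [div_le_iff₀ pi_pos]
    have : x / (π * l) * π = x / l := by field_simp
    nlinarith
  have hcx : 1 / 2 + x / (π * l) ≤ 1 / (4 * c) := by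
    rw [le_div_iff₀ (by positivity)]
    nlinarith [div_nonneg hx₀ (mul_pos pi_pos hl).le]
  calc x * (1 + 1 / (π * l)) + 1 / 2 ≤ x + 1 / (4 * c) := by
        rw [mul_one_add, mul_one_div]
        linarith
    _ = ∫ s in j..j + 1, (x - (s - (j + 3 / 4)) / c) := (integral_tangent_line j x c).symm
    _ ≤ ∫ s in j..j + 1, invG l s := by
        refine intervalIntegral.integral_mono_on (by linarith)
          (Continuous.intervalIntegrable (by fun_prop) _ _)
          (intervalIntegrable_invG hl hj (by linarith) hjl) fun s hs => ?_
        exact tangent_le_invG hl ht ⟨by linarith, hxl⟩ ⟨by linarith [hs.1], by linarith [hs.2]⟩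

theorem ofReal_invG_le_measure_lt_G (hl : 0 < l) (hs : s ∈ Icc 0 l) :
    ENNReal.ofReal (invG l s) ≤ volume.restrict (Ioc 0 l) {u | s < G l u} := by
  have hx := invG_mem hl hs
  have hsub : Ioo 0 (invG l s) ⊆ {u | s < G l u} ∩ Ioc 0 l := fun u hu =>
    ⟨G_invG hl hs ▸ strictAntiOn_G hl ⟨by linarith [hu.1], by linarith [hu.2, hx.2]⟩ hx hu.2,
      hu.1, by linarith [hu.2, hx.2]⟩
  calc ENNReal.ofReal (invG l s) = volume (Ioo 0 (invG l s)) := by rw [Real.volume_Ioo, sub_zero]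
    _ ≤ volume ({u | s < G l u} ∩ Ioc 0 l) := measure_mono hsub
    _ ≤ _ := Measure.le_restrict_apply _ _

-- Cavalieri: the region under `invG l` over `(0, K]` lies in the region under `G l` over `(0, l]`.
theorem integral_invG_le (hl : 0 < l) {K : ℝ} (hK₀ : 0 ≤ K) (hK : K ≤ l) :
    ∫ s in (0 : ℝ)..K, invG l s ≤ l ^ 2 / 8 := by
  have hG : 0 ≤ᵐ[volume.restrict (Ioc 0 l)] G l := by
    filter_upwards [ae_restrict_mem measurableSet_Ioc] with u hu
    exact G_nonneg hl ⟨by linarith [hu.1], hu.2⟩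
  have key : ∫⁻ s in Ioc 0 K, ENNReal.ofReal (invG l s) ≤ ENNReal.ofReal (l ^ 2 / 8) :=
    calc ∫⁻ s in Ioc 0 K, ENNReal.ofReal (invG l s)
        ≤ ∫⁻ s in Ioc 0 K, volume.restrict (Ioc 0 l) {u | s < G l u} :=
          setLIntegral_mono' measurableSet_Ioc fun s hs =>
            ofReal_invG_le_measure_lt_G hl ⟨hs.1.le, hs.2.trans hK⟩
      _ ≤ ∫⁻ s in Ioi 0, volume.restrict (Ioc 0 l) {u | s < G l u} :=
          lintegral_mono_set Ioc_subset_Ioi_self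
      _ = ∫⁻ u in Ioc 0 l, ENNReal.ofReal (G l u) :=
          (lintegral_eq_lintegral_meas_lt _ hG (continuous_G l).aemeasurable).symm
      _ = ENNReal.ofReal (l ^ 2 / 8) := by
          rw [← ofReal_integral_eq_lintegral_ofReal
            ((continuous_G l).integrableOn_Icc.mono_set Ioc_subset_Icc_self) hG,
            ← intervalIntegral.integral_of_le hl.le, integral_G hl]
  have hint := (intervalIntegrable_invG hl le_rfl hK₀ hK).1
  rw [intervalIntegral.integral_of_le hK₀,
    integral_eq_lintegral_pos_part_sub_lintegral_neg_part hint]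
  have := ENNReal.toReal_le_of_le_ofReal (by positivity) key
  linarith [ENNReal.toReal_nonneg (a := ∫⁻ s in Ioc 0 K, ENNReal.ofReal (-invG l s))]

theorem natCast_mem_Icc_of_le_floor (hl : 0 < l) {m : ℕ} (hm : m ≤ ⌊l⌋₊) :
    (m : ℝ) ∈ Icc (-l) l :=
  ⟨by linarith [m.cast_nonneg (α := ℝ)], (Nat.le_floor_iff hl.le).1 hm⟩

theorem card_filter_lt_floor_G (hl : 0 < l) {j : ℕ} (hj : (j : ℝ) + 3 / 4 ≤ G l 0) :
    #{m ∈ Finset.Icc 1 ⌊l⌋₊ | j < ⌊G l ((m : ℕ) : ℝ) + 1 / 4⌋₊} = ⌊invG l (j + 3 / 4)⌋₊ := by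
  have ht : (j : ℝ) + 3 / 4 ∈ Icc 0 l := ⟨by positivity, hj.trans (G_zero_le_self hl)⟩
  have hx₀ := invG_nonneg hl ht hj
  have key : ∀ m ≤ ⌊l⌋₊, j < ⌊G l m + 1 / 4⌋₊ ↔ m ≤ ⌊invG l (j + 3 / 4)⌋₊ := fun m hm => by
    rw [lt_floor_add_one_quarter_iff, Nat.le_floor_iff hx₀,
      le_invG_iff hl (natCast_mem_Icc_of_le_floor hl hm) ht]
  suffices h : {m ∈ Finset.Icc 1 ⌊l⌋₊ | j < ⌊G l ((m : ℕ) : ℝ) + 1 / 4⌋₊} =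
      Finset.Icc 1 ⌊invG l (j + 3 / 4)⌋₊ by
    rw [h, Nat.card_Icc, Nat.add_sub_cancel]
  ext m
  simp only [Finset.mem_filter, Finset.mem_Icc]
  constructor
  · rintro ⟨⟨hm₁, hm⟩, hjm⟩
    exact ⟨hm₁, (key m hm).1 hjm⟩
  · rintro ⟨hm₁, hm⟩
    have hml : m ≤ ⌊l⌋₊ := hm.trans (Nat.floor_mono (invG_mem hl ht).2)
    exact ⟨⟨hm₁, hml⟩, (key m hml).2 hm⟩

theorem invG_nonneg_of_lt_floor (hl : 0 < l) {j : ℕ} (hj : j < ⌊G l 0 + 1 / 4⌋₊) :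
    0 ≤ invG l (j + 3 / 4) := by
  have hj := lt_floor_add_one_quarter_iff.1 hj
  exact invG_nonneg hl ⟨by positivity, hj.trans (G_zero_le_self hl)⟩ hj

theorem sum_floor_G_eq_sum_floor_invG (hl : 0 < l) :
    ∑ m ∈ Finset.Icc 1 ⌊l⌋₊, ⌊G l m + 1 / 4⌋₊ =
      ∑ j ∈ Finset.range ⌊G l 0 + 1 / 4⌋₊, ⌊invG l (j + 3 / 4)⌋₊ := by
  rw [Finset.sum_eq_sum_range_card_lt _ _ fun m hm => Nat.floor_le_floor ?_]
  · exact Finset.sum_congr rfl fun j hj =>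
      card_filter_lt_floor_G hl (lt_floor_add_one_quarter_iff.1 (Finset.mem_range.1 hj))
  · gcongr
    exact (strictAntiOn_G hl).antitoneOn ⟨by linarith, hl.le⟩
      (natCast_mem_Icc_of_le_floor hl (Finset.mem_Icc.1 hm).2) m.cast_nonneg

theorem PD2_le_sum_invG (hl : 0 < l) :
    (PD2 l : ℝ) ≤
      ⌊G l 0 + 1 / 4⌋₊ + 2 * ∑ j ∈ Finset.range ⌊G l 0 + 1 / 4⌋₊, invG l (j + 3 / 4) := by
  have hPD2 : PD2 l =
      ⌊G l 0 + 1 / 4⌋₊ + 2 * ((∑ m ∈ Finset.Icc 1 ⌊l⌋₊, ⌊G l m + 1 / 4⌋₊ : ℕ) : ℤ) := by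
    rw [PD2, Int.natCast_floor_eq_floor (by linarith [G_nonneg hl ⟨by linarith, hl.le⟩]),
      Nat.cast_sum]
    congr 2
    refine Finset.sum_congr rfl fun m hm => (Int.natCast_floor_eq_floor ?_).symm
    linarith [G_nonneg hl (natCast_mem_Icc_of_le_floor hl (Finset.mem_Icc.1 hm).2)]
  rw [hPD2, sum_floor_G_eq_sum_floor_invG hl]
  push_cast
  gcongr with j hj
  exact Nat.floor_le (invG_nonneg_of_lt_floor hl (Finset.mem_range.1 hj))

theorem sum_invG_levels_le (hl : 0 < l) (hK : (⌊G l 0 + 1 / 4⌋₊ : ℝ) ≤ l) :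
    (∑ j ∈ Finset.range ⌊G l 0 + 1 / 4⌋₊, invG l (j + 3 / 4)) * (1 + 1 / (π * l)) +
      ⌊G l 0 + 1 / 4⌋₊ / 2 ≤ l ^ 2 / 8 := by
  set K := ⌊G l 0 + 1 / 4⌋₊
  have hrow : ∀ j ∈ Finset.range K, (j : ℝ) + 1 ≤ l ∧ (j : ℝ) + 3 / 4 ≤ G l 0 := fun j hj => by
    have hj := Finset.mem_range.1 hj
    exact ⟨le_trans (by exact_mod_cast hj) hK, lt_floor_add_one_quarter_iff.1 hj⟩
  calc (∑ j ∈ Finset.range K, invG l (j + 3 / 4)) * (1 + 1 / (π * l)) + K / 2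
      = ∑ j ∈ Finset.range K, (invG l (j + 3 / 4) * (1 + 1 / (π * l)) + 1 / 2) := by
        rw [Finset.sum_add_distrib, Finset.sum_mul, Finset.sum_const, Finset.card_range]
        simp [div_eq_mul_inv]
    _ ≤ ∑ j ∈ Finset.range K, ∫ s in (j : ℝ)..j + 1, invG l s :=
        Finset.sum_le_sum fun j hj => le_integral_invG hl j.cast_nonneg (hrow j hj).1 (hrow j hj).2
    _ = ∫ s in (0 : ℝ)..K, invG l s := by
        simpa using intervalIntegral.sum_integral_adjacent_intervals (a := fun i : ℕ => (i : ℝ))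
          fun i hi => by
            simpa using intervalIntegrable_invG hl i.cast_nonneg (by linarith)
              (hrow i (Finset.mem_range.2 hi)).1
    _ ≤ l ^ 2 / 8 := integral_invG_le hl K.cast_nonneg hK

theorem stmt17 (l : ℝ) (hl : 0 < l) : (PD2 l : ℝ) < l ^ 2 / 4 := by
  set K := ⌊G l 0 + 1 / 4⌋₊
  set S := ∑ j ∈ Finset.range K, invG l (j + 3 / 4)
  have hPD2 : (PD2 l : ℝ) ≤ K + 2 * S := PD2_le_sum_invG hl
  have hKG : (K : ℝ) ≤ l / π + 1 / 4 := by
    rw [← G_zero hl]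
    exact Nat.floor_le (by rw [G_zero hl]; positivity)
  obtain hK | hK := K.eq_zero_or_pos
  · simp only [S, hK, Finset.range_zero, Finset.sum_empty, CharP.cast_eq_zero] at hPD2
    nlinarith
  have hl' : 9 / 4 < l := by
    have : (1 : ℝ) ≤ K := by exact_mod_cast hK
    have := (le_div_iff₀ pi_pos).1 (by linarith : 3 / 4 ≤ l / π)
    linarith [pi_gt_three]
  have hπl : l / π ≤ l / 3 := div_le_div_of_nonneg_left hl.le (by norm_num) pi_gt_three.le
  have hrows := sum_invG_levels_le hl (by linarith)
  have hS : 0 ≤ S :=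
    Finset.sum_nonneg fun j hj => invG_nonneg_of_lt_floor hl (Finset.mem_range.1 hj)
  rcases hS.eq_or_lt with hS | hS
  · nlinarith
  · have : 0 < S / (π * l) := by positivity
    rw [mul_one_add, mul_one_div] at hrows
    linarith
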